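/- Let 0 < C < 1 and let A^C = {(x,y) : |x| ≤ C(1−y), 0 ≤ y < 1} be the partly asymptotic triangle with vertices (±C, 0) and asymptotic vertex (0,1). Then ∫∫_{A^C} (1 − x² − y²)^{−3/2} dx dy = 2 arcsin C. -/

import Mathlib

open MeasureTheory Set Real

/-!
Integrate along horizontal chords. At height `y` the triangle meets the chord
`|x| ≤ a := C (1 - y)`, and `x ↦ x / ((1 - y²) √(1 - y² - x²))` is a primitive of the density
`(1 - x² - y²) ^ (-3/2)`, so the chord contributes `2a / ((1 - y²) √(1 - y² - a²))`. As a function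
of `y` this has the primitive `-2 arcsin (C √((1 - y) / (1 + y)))`, which rises from `-2 arcsin C`
at `y = 0` to `0` at `y = 1`. The chord integral blows up like `(1 - y) ^ (-1/2)` at the asymptotic
vertex, but as the nonnegative derivative of a function continuous on `[0, 1]` it is integrable
there.
-/

lemma continuousOn_chordDensity (y : ℝ) :
    ContinuousOn (fun x : ℝ => (1 - x ^ 2 - y ^ 2) ^ (-(3 : ℝ) / 2)) {x | x ^ 2 + y ^ 2 < 1} :=
  (by fun_prop : Continuous fun x : ℝ => 1 - x ^ 2 - y ^ 2).continuousOn.rpow_const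
    fun x (hx : x ^ 2 + y ^ 2 < 1) => Or.inl (by linarith)

lemma hasDerivAt_chordAntideriv {x y : ℝ} (h : x ^ 2 + y ^ 2 < 1) :
    HasDerivAt (fun t => t / ((1 - y ^ 2) * √(1 - y ^ 2 - t ^ 2)))
      ((1 - x ^ 2 - y ^ 2) ^ (-(3 : ℝ) / 2)) x := by
  have hr : 0 < 1 - y ^ 2 := by nlinarith
  have hz : 0 < 1 - y ^ 2 - x ^ 2 := by linarith
  have hsqrt : HasDerivAt (fun t => √(1 - y ^ 2 - t ^ 2)) (-x / √(1 - y ^ 2 - x ^ 2)) x := by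
    refine (((hasDerivAt_pow 2 x).const_sub (1 - y ^ 2)).sqrt hz.ne').congr_deriv ?_
    field_simp
    ring
  have hrpow : (1 - x ^ 2 - y ^ 2) ^ (-(3 : ℝ) / 2)
      = ((1 - y ^ 2 - x ^ 2) * √(1 - y ^ 2 - x ^ 2))⁻¹ := by
    rw [show (-(3 : ℝ) / 2) = -(1 + 1 / 2) by norm_num, rpow_neg (by linarith),
      rpow_add' (by linarith) (by norm_num), rpow_one, ← sqrt_eq_rpow]
    ring_nf
  refine ((hasDerivAt_id x).div (hsqrt.const_mul (1 - y ^ 2)) (by positivity)).congr_deriv ?_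
  have hs := sq_sqrt hz.le
  simp only [id_eq, hrpow]
  field_simp
  linear_combination -x ^ 2 * hs

lemma sq_add_sq_lt_one_of_mem_uIcc {a x y : ℝ} (h : a ^ 2 + y ^ 2 < 1) (hx : x ∈ uIcc (-a) a) :
    x ^ 2 + y ^ 2 < 1 := by
  rcases mem_uIcc.1 hx with hx | hx <;> nlinarith [hx.1, hx.2]

noncomputable def chordIntegral (a y : ℝ) : ℝ := 2 * a / ((1 - y ^ 2) * √(1 - y ^ 2 - a ^ 2))

lemma integral_chordDensity {a y : ℝ} (h : a ^ 2 + y ^ 2 < 1) :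
    ∫ x in -a..a, (1 - x ^ 2 - y ^ 2) ^ (-(3 : ℝ) / 2) = chordIntegral a y := by
  have hchord : uIcc (-a) a ⊆ {x | x ^ 2 + y ^ 2 < 1} := fun _ => sq_add_sq_lt_one_of_mem_uIcc h
  rw [intervalIntegral.integral_eq_sub_of_hasDerivAt
    (fun x hx => hasDerivAt_chordAntideriv (hchord hx))
    ((continuousOn_chordDensity y).mono hchord).intervalIntegrable]
  simp only [chordIntegral, neg_sq]
  ring

noncomputable def trianglePrimitive (C t : ℝ) : ℝ := -2 * arcsin (C * √((1 - t) / (1 + t)))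

lemma continuousOn_trianglePrimitive (C : ℝ) : ContinuousOn (trianglePrimitive C) (Icc 0 1) := by
  unfold trianglePrimitive
  fun_prop (disch := grind)

lemma hasDerivAt_trianglePrimitive {C y : ℝ} (h : (C * (1 - y)) ^ 2 + y ^ 2 < 1) :
    HasDerivAt (trianglePrimitive C) (chordIntegral (C * (1 - y)) y) y := by
  have hy₀ : 0 < 1 + y := by nlinarith
  have hy₁ : 0 < 1 - y := by nlinarith
  set u := (1 - y) / (1 + y) with hu
  have hu₀ : 0 < u := by positivity
  have hCu : C ^ 2 * u < 1 := by
    rw [hu, mul_div_assoc', div_lt_one hy₀]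
    nlinarith
  have hz : (C * √u) ^ 2 < 1 := by rwa [mul_pow, sq_sqrt hu₀.le]
  have hquot : HasDerivAt (fun t => (1 - t) / (1 + t)) (-2 / (1 + y) ^ 2) y := by
    refine (((hasDerivAt_id y).const_sub 1).div ((hasDerivAt_id y).const_add 1)
      hy₀.ne').congr_deriv ?_
    simp only [id_eq]
    ring
  have hz' := abs_lt.1 ((sq_lt_one_iff_abs_lt_one _).1 hz)
  have harcsin := (hasDerivAt_arcsin (by linarith) (by linarith)).comp y
    ((hquot.sqrt hu₀.ne').const_mul C)
  rw [← hu] at harcsin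
  refine (harcsin.const_mul (-2)).congr_deriv ?_
  have hroot : √(1 - (C * √u) ^ 2) * √u * (1 + y) = √(1 - y ^ 2 - (C * (1 - y)) ^ 2) := by
    rw [← sqrt_mul (by linarith), ← sqrt_sq hy₀.le, ← sqrt_mul (by positivity)]
    congr 1
    rw [mul_pow, sq_sqrt hu₀.le, hu]
    field_simp
    ring
  have hr : 1 - y ^ 2 ≠ 0 := by nlinarith
  rw [chordIntegral, ← hroot]
  field_simp
  ring

lemma triangle_chord_sq_add_sq_lt_one {C y : ℝ} (hC : C ^ 2 < 1) (hy : y ∈ Ico 0 1) :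
    (C * (1 - y)) ^ 2 + y ^ 2 < 1 := by
  obtain ⟨hy₀, hy₁⟩ := hy
  nlinarith [mul_pos (sub_pos.2 hC) (pow_pos (sub_pos.2 hy₁) 2),
    mul_nonneg hy₀ (sub_pos.2 hy₁).le]

lemma integrableOn_chordIntegral_triangle {C : ℝ} (hC₀ : 0 ≤ C) (hC₁ : C < 1) :
    IntegrableOn (fun y => chordIntegral (C * (1 - y)) y) (Ico 0 1) := by
  rw [integrableOn_Ico_iff_integrableOn_Ioo]
  refine (intervalIntegral.integrableOn_deriv_of_nonneg (continuousOn_trianglePrimitive C)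
    (fun y hy => hasDerivAt_trianglePrimitive (triangle_chord_sq_add_sq_lt_one (by nlinarith)
      (Ioo_subset_Ico_self hy)))
    fun y ⟨hy₀, hy₁⟩ => ?_).mono_set Ioo_subset_Ioc_self
  exact div_nonneg (by nlinarith) (mul_nonneg (by nlinarith) (sqrt_nonneg _))

lemma setIntegral_chordIntegral_triangle {C : ℝ} (hC₀ : 0 ≤ C) (hC₁ : C < 1) :
    ∫ y in Ico 0 1, chordIntegral (C * (1 - y)) y = 2 * arcsin C := by
  rw [integral_Ico_eq_integral_Ioc, ← intervalIntegral.integral_of_le zero_le_one,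
    intervalIntegral.integral_eq_sub_of_hasDerivAt_of_le zero_le_one
      (continuousOn_trianglePrimitive C)
      (fun y hy => hasDerivAt_trianglePrimitive (triangle_chord_sq_add_sq_lt_one (by nlinarith)
        (Ioo_subset_Ico_self hy)))
      ((intervalIntegrable_iff_integrableOn_Ico_of_le zero_le_one).2
        (integrableOn_chordIntegral_triangle hC₀ hC₁))]
  norm_num [trianglePrimitive]

lemma indicator_horizontallySimple_apply (s : Set ℝ) (u v : ℝ → ℝ) (f : ℝ × ℝ → ℝ)
    (x y : ℝ) :
    {p : ℝ × ℝ | p.2 ∈ s ∧ p.1 ∈ Icc (u p.2) (v p.2)}.indicator f (x, y)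
      = s.indicator (fun y => (Icc (u y) (v y)).indicator (fun x => f (x, y)) x) y := by
  by_cases hy : y ∈ s <;> by_cases hx : x ∈ Icc (u y) (v y) <;>
    simp [indicator, hx, hy, -mem_Icc]

lemma setIntegral_horizontallySimple {s : Set ℝ} (hs : MeasurableSet s) {u v : ℝ → ℝ}
    (hu : Measurable u) (hv : Measurable v) {f : ℝ × ℝ → ℝ} (hf : Measurable f)
    (hf₀ : ∀ y ∈ s, ∀ x ∈ Icc (u y) (v y), 0 ≤ f (x, y))
    (hsec : ∀ y ∈ s, IntegrableOn (fun x => f (x, y)) (Icc (u y) (v y)))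
    (hint : IntegrableOn (fun y => ∫ x in Icc (u y) (v y), f (x, y)) s) :
    ∫ p in {p : ℝ × ℝ | p.2 ∈ s ∧ p.1 ∈ Icc (u p.2) (v p.2)}, f p
      = ∫ y in s, ∫ x in Icc (u y) (v y), f (x, y) := by
  set R := {p : ℝ × ℝ | p.2 ∈ s ∧ p.1 ∈ Icc (u p.2) (v p.2)}
  have hR : MeasurableSet R :=
    (hs.preimage measurable_snd).inter
      ((measurableSet_le (hu.comp measurable_snd) measurable_fst).inter
        (measurableSet_le measurable_fst (hv.comp measurable_snd)))
  have hsection : ∀ y, ∫ x, R.indicator f (x, y)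
      = s.indicator (fun y => ∫ x in Icc (u y) (v y), f (x, y)) y := by
    intro y
    simp only [R, indicator_horizontallySimple_apply]
    by_cases hy : y ∈ s
    · simp only [indicator_of_mem hy, integral_indicator measurableSet_Icc]
    · simp only [indicator_of_notMem hy, integral_zero]
  have hF₀ : 0 ≤ R.indicator f := indicator_nonneg fun p hp => hf₀ _ hp.1 _ hp.2
  have hFint : Integrable (R.indicator f) (volume.prod volume) := by
    refine (integrable_prod_iff' ?_).2 ⟨ae_of_all _ fun y => ?_, ?_⟩
    · rw [← Measure.volume_eq_prod]
      exact (hf.indicator hR).aestronglyMeasurable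
    · simp only [R, indicator_horizontallySimple_apply]
      by_cases hy : y ∈ s
      · simpa [indicator_of_mem hy] using (hsec y hy).integrable_indicator measurableSet_Icc
      · simp [indicator_of_notMem hy]
    · simp only [Real.norm_of_nonneg (hF₀ _), hsection]
      exact hint.integrable_indicator hs
  calc ∫ p in R, f p = ∫ p, R.indicator f p ∂(volume.prod volume) := by
        rw [integral_indicator hR, Measure.volume_eq_prod]
    _ = ∫ y, s.indicator (fun y => ∫ x in Icc (u y) (v y), f (x, y)) y := by
        simp only [integral_prod_symm _ hFint, hsection]
    _ = ∫ y in s, ∫ x in Icc (u y) (v y), f (x, y) := integral_indicator hs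

theorem area_asymptotic_triangle (C : ℝ) (hC0 : 0 < C) (hC1 : C < 1)
    (A : Set (ℝ × ℝ))
    (hA : A = {p : ℝ × ℝ | |p.1| ≤ C * (1 - p.2) ∧ 0 ≤ p.2 ∧ p.2 < 1}) :
    (∫ p in A, (1 - p.1 ^ 2 - p.2 ^ 2) ^ (-(3:ℝ)/2)) = 2 * Real.arcsin C := by
  have hchord (y : ℝ) (hy : y ∈ Ico 0 1) : (C * (1 - y)) ^ 2 + y ^ 2 < 1 :=
    triangle_chord_sq_add_sq_lt_one (by nlinarith) hy
  have hsection (y : ℝ) (hy : y ∈ Ico 0 1) :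
      ∫ x in Icc (-(C * (1 - y))) (C * (1 - y)), (1 - x ^ 2 - y ^ 2) ^ (-(3:ℝ)/2)
        = chordIntegral (C * (1 - y)) y := by
    rw [integral_Icc_eq_integral_Ioc, ← intervalIntegral.integral_of_le (by nlinarith [hy.2]),
      integral_chordDensity (hchord y hy)]
  have hA' :
      A = {p : ℝ × ℝ | p.2 ∈ Ico 0 1 ∧ p.1 ∈ Icc (-(C * (1 - p.2))) (C * (1 - p.2))} := by
    ext p
    simp only [hA, mem_ofPred_eq, mem_Ico, mem_Icc, abs_le]
    tauto
  rw [hA', setIntegral_horizontallySimple (u := fun y => -(C * (1 - y))) (v := fun y => C * (1 - y))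
      (f := fun p => (1 - p.1 ^ 2 - p.2 ^ 2) ^ (-(3:ℝ)/2)) measurableSet_Ico
      (by fun_prop) (by fun_prop) (by fun_prop)
      (fun y hy x hx => rpow_nonneg (show 0 ≤ 1 - x ^ 2 - y ^ 2 by
        linarith [sq_add_sq_lt_one_of_mem_uIcc (hchord y hy) (Icc_subset_uIcc hx)]) _)
      (fun y hy => ((continuousOn_chordDensity y).mono fun x hx =>
        sq_add_sq_lt_one_of_mem_uIcc (hchord y hy) (Icc_subset_uIcc hx)).integrableOn_Icc)
      ((integrableOn_chordIntegral_triangle hC0.le hC1).congr_fun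
        (fun y hy => (hsection y hy).symm) measurableSet_Ico),
    setIntegral_congr_fun measurableSet_Ico hsection]
  exact setIntegral_chordIntegral_triangle hC0.le hC1
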